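/- arXiv:2501.00687 — 3 statements merged into one kernel-verified Lean document; each statement's English description precedes it below -/
import Mathlib

section
/- Let $K$ be a convex body containing the origin in its interior, with support function $h_K$ and radial function $\rho_K$. For a continuous $f:\mathbb{S}^{n-1}\to\mathbb{R}$ and small $|t|$, let $[h_t]$ be the Wulff shape of $h_t=h_K+tf$. Then for almost all $v\in\mathbb{S}^{n-1}$ (with respect to spherical Lebesgue measure), $\frac{d}{dt}\Big|_{t=0}\rho_{[h_t]}(v)=\frac{f(\mathbf{g}_K(r_K(v)))}{h_K(\mathbf{g}_K(r_K(v)))}\,\rho_K(v)$, and moreover $|\rho_{[h_t]}(v)-\rho_K(v)|\le M|t|$ for some constant $M$ independent of $v$ and $t$. -/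
open scoped RealInnerProductSpace Pointwise
open MeasureTheory Set


private lemma deriv_eq_of_linear_lower {q : ℝ → ℝ} {d m : ℝ}
    (hq : HasDerivAt q d 0) (h : ∀ s : ℝ, s * m ≤ q s - q 0) : d = m := by
  rw [hasDerivAt_iff_tendsto_slope] at hq
  have hsl : ∀ s : ℝ, slope q 0 s = (q s - q 0) / s := by
    intro s; rw [slope_def_field]; ring_nf
  have h1 : m ≤ d := by
    have hmono : Filter.Tendsto (slope q 0) (nhdsWithin 0 (Set.Ioi 0)) (nhds d) :=
      hq.mono_left (nhdsWithin_mono _ (fun s hs => ne_of_gt hs))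
    refine ge_of_tendsto hmono ?_
    filter_upwards [self_mem_nhdsWithin] with s hs
    rw [hsl s, le_div_iff₀ hs]
    linarith [h s]
  have h2 : d ≤ m := by
    have hmono : Filter.Tendsto (slope q 0) (nhdsWithin 0 (Set.Iio 0)) (nhds d) :=
      hq.mono_left (nhdsWithin_mono _ (fun s hs => ne_of_lt hs))
    refine le_of_tendsto hmono ?_
    filter_upwards [self_mem_nhdsWithin] with s hs
    rw [hsl s, div_le_iff_of_neg hs]
    linarith [h s]
  linarith

private lemma diff_gauge_smul {E : Type*} [NormedAddCommGroup E] [NormedSpace ℝ E]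
    {K : Set E} {c : ℝ} (hc : 0 < c) {x : E}
    (h : DifferentiableAt ℝ (gauge K) (c • x)) : DifferentiableAt ℝ (gauge K) x := by
  have hg : gauge K = fun w => c⁻¹ * gauge K (c • w) := by
    funext w
    rw [gauge_smul_of_nonneg hc.le, smul_eq_mul]
    field_simp
  rw [hg]
  exact (h.comp x (differentiableAt_id.const_smul c)).const_mul _

private lemma toSphere_null {n : ℕ} (K : Set (EuclideanSpace ℝ (Fin n)))
    {L : NNReal} (hL : LipschitzWith L (gauge K)) :
    (∀ᵐ (v : Metric.sphere (0 : EuclideanSpace ℝ (Fin n)) 1)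
        ∂((volume : Measure (EuclideanSpace ℝ (Fin n))).toSphere),
      DifferentiableAt ℝ (gauge K) (v : EuclideanSpace ℝ (Fin n))) := by
  rw [MeasureTheory.ae_iff]
  have hSm : MeasurableSet {v : Metric.sphere (0 : EuclideanSpace ℝ (Fin n)) 1 |
      ¬ DifferentiableAt ℝ (gauge K) (v : EuclideanSpace ℝ (Fin n))} :=
    (measurableSet_of_differentiableAt ℝ (gauge K)).compl.preimage measurable_subtype_coe
  rw [Measure.toSphere_apply' _ hSm]
  have hnull : volume {x : EuclideanSpace ℝ (Fin n) | ¬ DifferentiableAt ℝ (gauge K) x} = 0 := by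
    have := hL.ae_differentiableAt (μ := volume)
    rwa [MeasureTheory.ae_iff] at this
  have hsub : (Set.Ioo (0:ℝ) 1 •
      (Subtype.val '' {v : Metric.sphere (0 : EuclideanSpace ℝ (Fin n)) 1 |
        ¬ DifferentiableAt ℝ (gauge K) (v : EuclideanSpace ℝ (Fin n))}))
      ⊆ {x | ¬ DifferentiableAt ℝ (gauge K) x} := by
    rintro z hz
    rw [Set.mem_smul] at hz
    obtain ⟨c, hc, x, hx, rfl⟩ := hz
    obtain ⟨v, hvS, rfl⟩ := hx
    intro hdiff
    exact hvS (diff_gauge_smul hc.1 hdiff)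
  rw [measure_mono_null hsub hnull, mul_zero]

private lemma stmt13_basic {n : ℕ} (hn : 1 ≤ n)
    (K : Set (EuclideanSpace ℝ (Fin n)))
    (hKconv : Convex ℝ K) (hKcomp : IsCompact K)
    (hK0 : (0 : EuclideanSpace ℝ (Fin n)) ∈ interior K)
    (hK ρK : EuclideanSpace ℝ (Fin n) → ℝ)
    (hhK : ∀ v, hK v = sSup ((fun x => ⟪x, v⟫) '' K))
    (f : EuclideanSpace ℝ (Fin n) → ℝ) (hf : Continuous f) : True := by
  have hKcl : IsClosed K := hKcomp.isClosed
  have hKne : K.Nonempty := ⟨0, interior_subset hK0⟩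
  obtain ⟨ε, hε, hball⟩ : ∃ ε > 0, Metric.ball (0 : EuclideanSpace ℝ (Fin n)) ε ⊆ K := by
    rw [mem_interior_iff_mem_nhds, Metric.mem_nhds_iff] at hK0; exact hK0
  set r : ℝ := ε / 2 with hr_def
  have hr : 0 < r := by positivity
  have hrmem : ∀ w : EuclideanSpace ℝ (Fin n), ‖w‖ ≤ 1 → r • w ∈ K := by
    intro w hw
    apply hball
    rw [Metric.mem_ball, dist_zero_right, norm_smul, Real.norm_eq_abs, abs_of_pos hr]
    nlinarith [norm_nonneg w]
  obtain ⟨R₀, hR₀⟩ := hKcomp.isBounded.subset_closedBall 0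
  set R : ℝ := max R₀ r with hR_def
  have hRK : K ⊆ Metric.closedBall 0 R :=
    hR₀.trans (Metric.closedBall_subset_closedBall (le_max_left _ _))
  have hR : 0 < R := lt_of_lt_of_le hr (le_max_right _ _)
  have hnorm_le : ∀ x ∈ K, ‖x‖ ≤ R := fun x hx => by
    simpa [Metric.mem_closedBall, dist_zero_right] using hRK hx
  have hbdd : ∀ u : EuclideanSpace ℝ (Fin n), BddAbove ((fun x => ⟪x, u⟫) '' K) := by
    intro u
    refine ⟨R * ‖u‖, ?_⟩
    rintro y ⟨x, hx, rfl⟩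
    calc ⟪x, u⟫ ≤ ‖x‖ * ‖u‖ := real_inner_le_norm x u
      _ ≤ R * ‖u‖ := by
        have := hnorm_le x hx
        have := norm_nonneg u
        nlinarith
  have hKle : ∀ x ∈ K, ∀ u, ⟪x, u⟫ ≤ hK u := fun x hx u => by
    rw [hhK]; exact le_csSup (hbdd u) ⟨x, hx, rfl⟩
  have hhK_ge : ∀ u : EuclideanSpace ℝ (Fin n), ‖u‖ = 1 → r ≤ hK u := by
    intro u hu
    have h1 := hKle (r • u) (hrmem u hu.le) u
    rwa [real_inner_smul_left, real_inner_self_eq_norm_sq, hu, one_pow, mul_one] at h1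
  have hhK_le : ∀ u : EuclideanSpace ℝ (Fin n), ‖u‖ = 1 → hK u ≤ R := by
    intro u hu
    rw [hhK]
    apply csSup_le (hKne.image _)
    rintro y ⟨x, hx, rfl⟩
    calc ⟪x, u⟫ ≤ ‖x‖ * ‖u‖ := real_inner_le_norm x u
      _ ≤ R := by rw [hu, mul_one]; exact hnorm_le x hx
  obtain ⟨F, hF, hFb⟩ : ∃ F : ℝ, 0 < F ∧ ∀ u : EuclideanSpace ℝ (Fin n), ‖u‖ = 1 → |f u| ≤ F := by
    obtain ⟨C, hC⟩ := (isCompact_sphere (0 : EuclideanSpace ℝ (Fin n)) 1).exists_bound_of_continuousOn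
      hf.continuousOn
    refine ⟨max C 1, lt_of_lt_of_le one_pos (le_max_right _ _), fun u hu => ?_⟩
    have := hC u (by rwa [mem_sphere_zero_iff_norm])
    simpa using this.trans (le_max_left _ _)
  trivial

private lemma stmt13_W0 {n : ℕ}
    (K : Set (EuclideanSpace ℝ (Fin n)))
    (hKconv : Convex ℝ K) (hKcl : IsClosed K)
    (hK0mem : (0 : EuclideanSpace ℝ (Fin n)) ∈ K)
    (hK : EuclideanSpace ℝ (Fin n) → ℝ)
    (hhK : ∀ v, hK v = sSup ((fun x => ⟪x, v⟫) '' K))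
    (hbdd : ∀ u : EuclideanSpace ℝ (Fin n), BddAbove ((fun x => ⟪x, u⟫) '' K))
    (hKle : ∀ x ∈ K, ∀ u, ⟪x, u⟫ ≤ hK u)
    (hKne : K.Nonempty)
    (f : EuclideanSpace ℝ (Fin n) → ℝ)
    (W : ℝ → Set (EuclideanSpace ℝ (Fin n)))
    (hW : ∀ t, W t = {x : EuclideanSpace ℝ (Fin n) |
      ∀ u : EuclideanSpace ℝ (Fin n), ‖u‖ = 1 → ⟪x, u⟫ ≤ hK u + t * f u}) : W 0 = K := by
  rw [hW]
  ext x
  simp only [zero_mul, add_zero, mem_setOf_eq]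
  constructor
  · intro hx
    by_contra hxK
    obtain ⟨φ, s, hφK, hφx⟩ := geometric_hahn_banach_closed_point hKconv hKcl hxK
    set w := (InnerProductSpace.toDual ℝ (EuclideanSpace ℝ (Fin n))).symm φ with hw_def
    have hwy : ∀ y, ⟪y, w⟫ = φ y := fun y => by
      rw [real_inner_comm]; exact InnerProductSpace.toDual_symm_apply
    have hs0 : (0:ℝ) < s := by have := hφK 0 hK0mem; simpa using this
    have hw0 : w ≠ 0 := by
      intro h0
      have := hφx
      have h1 : φ x = 0 := by rw [← hwy x, h0, inner_zero_right]
      linarith [h1 ▸ hφx, hs0]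
    set u : EuclideanSpace ℝ (Fin n) := ‖w‖⁻¹ • w with hu_def
    have hwpos : (0:ℝ) < ‖w‖ := norm_pos_iff.mpr hw0
    have hu1 : ‖u‖ = 1 := by
      rw [hu_def, norm_smul, Real.norm_eq_abs, abs_of_pos (by positivity), inv_mul_cancel₀ hwpos.ne']
    have hKu : hK u ≤ ‖w‖⁻¹ * s := by
      rw [hhK]
      apply csSup_le (hKne.image _)
      rintro y ⟨z, hz, rfl⟩
      show ⟪z, u⟫ ≤ ‖w‖⁻¹ * s
      have h3 : ⟪z, u⟫ = ‖w‖⁻¹ * ⟪z, w⟫ := by rw [hu_def, real_inner_smul_right]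
      rw [h3, hwy z]
      have := (hφK z hz).le
      have h2 : (0:ℝ) ≤ ‖w‖⁻¹ := by positivity
      nlinarith
    have hxu : ⟪x, u⟫ = ‖w‖⁻¹ * φ x := by rw [hu_def, real_inner_smul_right, hwy x]
    have := hx u hu1
    rw [hxu] at this
    have : ‖w‖⁻¹ * φ x ≤ ‖w‖⁻¹ * s := this.trans hKu
    have := (mul_le_mul_iff_right₀ (by positivity : (0:ℝ) < ‖w‖⁻¹)).mp this
    linarith
  · intro hxK u _
    exact hKle x hxK u

private lemma stmt13_gauge {n : ℕ}
    (K : Set (EuclideanSpace ℝ (Fin n)))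
    (hKconv : Convex ℝ K) (hKcl : IsClosed K)
    (hK0 : (0 : EuclideanSpace ℝ (Fin n)) ∈ interior K)
    (r : ℝ) (hr : 0 < r)
    (hrmem : ∀ w : EuclideanSpace ℝ (Fin n), ‖w‖ ≤ 1 → r • w ∈ K) :
    (Absorbent ℝ K) ∧ LipschitzWith (Real.toNNReal r⁻¹) (gauge K) := by
  have hnhds : K ∈ nhds (0 : EuclideanSpace ℝ (Fin n)) := mem_interior_iff_mem_nhds.mp hK0
  have habs : Absorbent ℝ K := absorbent_nhds_zero hnhds
  have hKne : K.Nonempty := ⟨0, interior_subset hK0⟩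
  have hgle : ∀ x : EuclideanSpace ℝ (Fin n), gauge K x ≤ r⁻¹ * ‖x‖ := by
    intro x
    apply gauge_le_of_mem (by positivity)
    rcases eq_or_ne x 0 with rfl | hx
    · simp only [norm_zero, mul_zero, zero_smul_set hKne]
      exact mem_singleton _
    · have hxn : (0:ℝ) < ‖x‖ := norm_pos_iff.mpr hx
      rw [mem_smul_set]
      refine ⟨r • (‖x‖⁻¹ • x), hrmem _ ?_, ?_⟩
      · rw [norm_smul, Real.norm_eq_abs, abs_of_pos (by positivity), inv_mul_cancel₀ hxn.ne']
      · rw [smul_smul, smul_smul]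
        rw [show r⁻¹ * ‖x‖ * r * ‖x‖⁻¹ = 1 by field_simp]
        exact one_smul _ _
  constructor
  · exact habs
  · apply LipschitzWith.of_dist_le_mul
    intro x y
    rw [Real.dist_eq, Real.coe_toNNReal _ (by positivity), dist_eq_norm, abs_sub_le_iff]
    have key : ∀ a b : EuclideanSpace ℝ (Fin n), gauge K a - gauge K b ≤ r⁻¹ * ‖a - b‖ := by
      intro a b
      have h1 : gauge K a ≤ gauge K b + gauge K (a - b) := by
        have := gauge_add_le hKconv habs b (a - b)
        simpa using this
      have := hgle (a - b)
      linarith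
    constructor
    · exact key x y
    · have := key y x
      rwa [norm_sub_rev] at this

private lemma stmt13_radial {n : ℕ}
    (K : Set (EuclideanSpace ℝ (Fin n)))
    (hKcl : IsClosed K)
    (r R : ℝ) (hr : 0 < r) (hR : 0 < R)
    (hrmem : ∀ w : EuclideanSpace ℝ (Fin n), ‖w‖ ≤ 1 → r • w ∈ K)
    (hnorm_le : ∀ x ∈ K, ‖x‖ ≤ R)
    (ρK : EuclideanSpace ℝ (Fin n) → ℝ)
    (hρK : ∀ v, ρK v = sSup {c : ℝ | 0 ≤ c ∧ c • v ∈ K})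
    (v : EuclideanSpace ℝ (Fin n)) (hv : ‖v‖ = 1) :
    (r ≤ ρK v ∧ ρK v ≤ R) ∧ (ρK v • v ∈ K ∧ ρK v • v ∈ frontier K) ∧
      (∀ c : ℝ, 0 ≤ c → c • v ∈ K → c ≤ ρK v) := by
  set S : Set ℝ := {c : ℝ | 0 ≤ c ∧ c • v ∈ K} with hS_def
  have hmemS : r ∈ S := ⟨hr.le, hrmem v hv.le⟩
  have hSne : S.Nonempty := ⟨r, hmemS⟩
  have hSbdd : BddAbove S := by
    refine ⟨R, fun c hc => ?_⟩
    have h1 : ‖c • v‖ ≤ R := hnorm_le _ hc.2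
    rwa [norm_smul, Real.norm_eq_abs, hv, mul_one, abs_of_nonneg hc.1] at h1
  have hScl : IsClosed S := by
    have : S = Ici (0:ℝ) ∩ (fun c : ℝ => c • v) ⁻¹' K := rfl
    rw [this]
    exact isClosed_Ici.inter (hKcl.preimage (continuous_id.smul continuous_const))
  have hρS : ρK v ∈ S := by rw [hρK]; exact hScl.csSup_mem hSne hSbdd
  have hρr : r ≤ ρK v := by rw [hρK]; exact le_csSup hSbdd hmemS
  have hρR : ρK v ≤ R := by
    rw [hρK]
    apply csSup_le hSne
    intro c hc
    have h1 : ‖c • v‖ ≤ R := hnorm_le _ hc.2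
    rwa [norm_smul, Real.norm_eq_abs, hv, mul_one, abs_of_nonneg hc.1] at h1
  refine ⟨⟨hρr, hρR⟩, ⟨hρS.2, ?_⟩, fun c hc0 hcK => by
    rw [hρK]; exact le_csSup hSbdd ⟨hc0, hcK⟩⟩
  rw [hKcl.frontier_eq]
  refine ⟨hρS.2, ?_⟩
  intro hint
  rw [mem_interior_iff_mem_nhds, Metric.mem_nhds_iff] at hint
  obtain ⟨ε', hε', hball'⟩ := hint
  have hmem2 : ρK v + ε' / 2 ∈ S := by
    refine ⟨by linarith [hr.le.trans hρr], ?_⟩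
    apply hball'
    rw [Metric.mem_ball, dist_eq_norm]
    have : (ρK v + ε' / 2) • v - ρK v • v = (ε' / 2) • v := by
      rw [← sub_smul]; ring_nf
    rw [this, norm_smul, Real.norm_eq_abs, hv, mul_one, abs_of_pos (by linarith)]
    linarith
  have := le_csSup hSbdd hmem2
  rw [← hρK] at this
  linarith

private lemma stmt13_uniq {n : ℕ}
    (K : Set (EuclideanSpace ℝ (Fin n)))
    (hKconv : Convex ℝ K)
    (hnhds : K ∈ nhds (0 : EuclideanSpace ℝ (Fin n)))
    (habs : Absorbent ℝ K)
    (r : ℝ) (hr : 0 < r)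
    (hrmem : ∀ w : EuclideanSpace ℝ (Fin n), ‖w‖ ≤ 1 → r • w ∈ K)
    (p : EuclideanSpace ℝ (Fin n)) (hpK : p ∈ K) (hpfr : p ∉ interior K)
    (hdp : DifferentiableAt ℝ (gauge K) p)
    (u₁ u₂ : EuclideanSpace ℝ (Fin n)) (hu₁ : ‖u₁‖ = 1) (hu₂ : ‖u₂‖ = 1)
    (hs₁ : ∀ y ∈ K, ⟪y, u₁⟫ ≤ ⟪p, u₁⟫) (hs₂ : ∀ y ∈ K, ⟪y, u₂⟫ ≤ ⟪p, u₂⟫) :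
    u₁ = u₂ := by
  have gauge1 : gauge K p = 1 := by
    refine le_antisymm (gauge_le_one_of_mem hpK) ?_
    by_contra hlt
    push_neg at hlt
    exact hpfr ((gauge_lt_one_iff_mem_interior hKconv hnhds).mp hlt)
  have hpu_pos : ∀ u : EuclideanSpace ℝ (Fin n), ‖u‖ = 1 →
      (∀ y ∈ K, ⟪y, u⟫ ≤ ⟪p, u⟫) → 0 < ⟪p, u⟫ := by
    intro u hu hs
    have h1 := hs (r • u) (hrmem u hu.le)
    rw [real_inner_smul_left, real_inner_self_eq_norm_sq, hu, one_pow, mul_one] at h1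
    linarith
  have hsubgrad : ∀ u : EuclideanSpace ℝ (Fin n), ‖u‖ = 1 →
      (∀ y ∈ K, ⟪y, u⟫ ≤ ⟪p, u⟫) → ∀ x, ⟪x, u⟫ / ⟪p, u⟫ ≤ gauge K x := by
    intro u hu hs x
    have hpu := hpu_pos u hu hs
    rw [div_le_iff₀ hpu]
    have key : ∀ ε > 0, ⟪x, u⟫ ≤ (gauge K x + ε) * ⟪p, u⟫ := by
      intro ε hε
      obtain ⟨b, hb0, hba, hbx⟩ := exists_lt_of_gauge_lt habs
        (lt_add_of_pos_right (gauge K x) hε)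
      rw [mem_smul_set] at hbx
      obtain ⟨y, hyK, rfl⟩ := hbx
      rw [real_inner_smul_left]
      have h1 := hs y hyK
      have h2 : b * ⟪y, u⟫ ≤ b * ⟪p, u⟫ := by nlinarith
      have h3 : b * ⟪p, u⟫ ≤ (gauge K (b • y) + ε) * ⟪p, u⟫ :=
        (mul_lt_mul_of_pos_right hba hpu).le
      linarith
    refine le_of_forall_pos_le_add fun ε hε => ?_
    have hkey := key (ε / ⟪p, u⟫) (div_pos hε hpu)
    rw [add_mul, div_mul_cancel₀ _ hpu.ne'] at hkey
    exact hkey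
  have hfd : ∀ u : EuclideanSpace ℝ (Fin n), ‖u‖ = 1 →
      (∀ y ∈ K, ⟪y, u⟫ ≤ ⟪p, u⟫) → ∀ z, (fderiv ℝ (gauge K) p) z = ⟪z, u⟫ / ⟪p, u⟫ := by
    intro u hu hs z
    have hpu := hpu_pos u hu hs
    set q : ℝ → ℝ := fun s => gauge K (p + s • z) with hq_def
    have hline : HasDerivAt (fun s : ℝ => p + s • z) z 0 := by
      simpa using ((hasDerivAt_id (0:ℝ)).smul_const z).const_add p
    have hq : HasDerivAt q ((fderiv ℝ (gauge K) p) z) 0 := by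
      have h0 : p + (0:ℝ) • z = p := by simp
      have hfd0 : HasFDerivAt (gauge K) (fderiv ℝ (gauge K) (p + (0:ℝ) • z)) (p + (0:ℝ) • z) := by
        rw [h0]; exact hdp.hasFDerivAt
      have hres := hfd0.comp_hasDerivAt 0 hline
      rw [h0] at hres
      exact hres
    have hlow : ∀ s : ℝ, s * (⟪z, u⟫ / ⟪p, u⟫) ≤ q s - q 0 := by
      intro s
      have h1 : ⟪p + s • z, u⟫ / ⟪p, u⟫ ≤ q s := hsubgrad u hu hs _
      rw [inner_add_left, real_inner_smul_left, add_div, div_self hpu.ne'] at h1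
      have hq0 : q 0 = 1 := by simp [hq_def, gauge1]
      rw [hq0]
      rw [mul_div_assoc] at h1
      linarith
    exact deriv_eq_of_linear_lower hq hlow
  have heq : ∀ z, ⟪z, ⟪p, u₁⟫⁻¹ • u₁ - ⟪p, u₂⟫⁻¹ • u₂⟫ = 0 := by
    intro z
    have h1 := hfd u₁ hu₁ hs₁ z
    have h2 := hfd u₂ hu₂ hs₂ z
    rw [inner_sub_right, real_inner_smul_right, real_inner_smul_right]
    rw [← div_eq_inv_mul, ← div_eq_inv_mul]
    rw [← h1, ← h2]
    ring
  have hw0 : ⟪p, u₁⟫⁻¹ • u₁ - ⟪p, u₂⟫⁻¹ • u₂ = 0 := by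
    have := heq (⟪p, u₁⟫⁻¹ • u₁ - ⟪p, u₂⟫⁻¹ • u₂)
    rwa [real_inner_self_eq_norm_sq, pow_eq_zero_iff (by norm_num), norm_eq_zero] at this
  have hp1 := hpu_pos u₁ hu₁ hs₁
  have hp2 := hpu_pos u₂ hu₂ hs₂
  rw [sub_eq_zero] at hw0
  have hnorms : ⟪p, u₁⟫⁻¹ = ⟪p, u₂⟫⁻¹ := by
    have := congrArg norm hw0
    rwa [norm_smul, norm_smul, Real.norm_eq_abs, Real.norm_eq_abs, hu₁, hu₂, mul_one, mul_one,
      abs_of_pos (by positivity), abs_of_pos (by positivity)] at this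
  rw [hnorms] at hw0
  exact smul_right_injective _ (by positivity) hw0

private lemma stmt13_lip {n : ℕ}
    (K : Set (EuclideanSpace ℝ (Fin n)))
    (hK : EuclideanSpace ℝ (Fin n) → ℝ)
    (f : EuclideanSpace ℝ (Fin n) → ℝ)
    (r R F : ℝ) (hr : 0 < r) (hR : 0 < R) (hF : 0 < F) (hrR : r ≤ R)
    (hhK_ge : ∀ u : EuclideanSpace ℝ (Fin n), ‖u‖ = 1 → r ≤ hK u)
    (hFb : ∀ u : EuclideanSpace ℝ (Fin n), ‖u‖ = 1 → |f u| ≤ F)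
    (hKiff : ∀ x : EuclideanSpace ℝ (Fin n),
      x ∈ K ↔ ∀ u : EuclideanSpace ℝ (Fin n), ‖u‖ = 1 → ⟪x, u⟫ ≤ hK u)
    (W : ℝ → Set (EuclideanSpace ℝ (Fin n)))
    (hW : ∀ t, W t = {x : EuclideanSpace ℝ (Fin n) |
      ∀ u : EuclideanSpace ℝ (Fin n), ‖u‖ = 1 → ⟪x, u⟫ ≤ hK u + t * f u})
    (ρK : EuclideanSpace ℝ (Fin n) → ℝ)
    (v : EuclideanSpace ℝ (Fin n)) (hv : ‖v‖ = 1)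
    (hρr : r ≤ ρK v) (hρR : ρK v ≤ R) (hρKv : ρK v • v ∈ K)
    (hρKmax : ∀ c : ℝ, 0 ≤ c → c • v ∈ K → c ≤ ρK v)
    (ρW : ℝ → EuclideanSpace ℝ (Fin n) → ℝ)
    (hρW : ∀ t v, ρW t v = sSup {c : ℝ | 0 ≤ c ∧ c • v ∈ W t})
    (t : ℝ) (ht : |t| < r / (2 * F)) :
    (0 : EuclideanSpace ℝ (Fin n)) ∈ W t ∧ BddAbove {c : ℝ | 0 ≤ c ∧ c • v ∈ W t} ∧
      |ρW t v - ρK v| ≤ (R * F / r + 1) * |t| := by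
  have htF : |t| * F < r / 2 := by
    rw [lt_div_iff₀ (by positivity)] at ht
    nlinarith
  have ht0 : 0 ≤ |t| := abs_nonneg t
  have htf_bound : ∀ u : EuclideanSpace ℝ (Fin n), ‖u‖ = 1 → |t * f u| ≤ |t| * F := by
    intro u hu
    rw [abs_mul]
    exact mul_le_mul_of_nonneg_left (hFb u hu) ht0
  -- 0 ∈ W t
  have h0W : (0 : EuclideanSpace ℝ (Fin n)) ∈ W t := by
    rw [hW]
    intro u hu
    rw [inner_zero_left]
    have h1 := hhK_ge u hu
    have h2 := (abs_le.mp (htf_bound u hu)).1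
    linarith
  -- λ • K ⊆ W t
  have hlamK : ∀ x ∈ K, (1 - |t| * F / r) • x ∈ W t := by
    intro x hx
    rw [hW]
    intro u hu
    rw [real_inner_smul_left]
    have h1 : ⟪x, u⟫ ≤ hK u := (hKiff x).mp hx u hu
    have h2 := hhK_ge u hu
    have h3 := (abs_le.mp (htf_bound u hu)).1
    have hlam0 : 0 ≤ 1 - |t| * F / r := by
      rw [sub_nonneg, div_le_one hr]
      linarith
    have h4 : (1 - |t| * F / r) * ⟪x, u⟫ ≤ (1 - |t| * F / r) * hK u :=
      mul_le_mul_of_nonneg_left h1 hlam0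
    have h5 : (|t| * F / r) * hK u ≥ |t| * F := by
      rw [ge_iff_le, div_mul_eq_mul_div, le_div_iff₀ hr]
      nlinarith [mul_le_mul_of_nonneg_left h2 (mul_nonneg ht0 hF.le)]
    nlinarith
  -- W t ⊆ μ • K
  have hmu : (0:ℝ) < 1 + |t| * F / r := by positivity
  have hmuK : ∀ x ∈ W t, (1 + |t| * F / r)⁻¹ • x ∈ K := by
    intro x hx
    rw [hW] at hx
    rw [hKiff]
    intro u hu
    rw [real_inner_smul_left]
    have h1 := hx u hu
    have h2 := hhK_ge u hu
    have h3 := (abs_le.mp (htf_bound u hu)).2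
    have h4 : |t| * F ≤ (|t| * F / r) * hK u := by
      rw [div_mul_eq_mul_div, le_div_iff₀ hr]
      nlinarith [mul_le_mul_of_nonneg_left h2 (mul_nonneg ht0 hF.le)]
    have h5 : ⟪x, u⟫ ≤ (1 + |t| * F / r) * hK u := by nlinarith
    calc (1 + |t| * F / r)⁻¹ * ⟪x, u⟫
        ≤ (1 + |t| * F / r)⁻¹ * ((1 + |t| * F / r) * hK u) :=
          mul_le_mul_of_nonneg_left h5 (by positivity)
      _ = hK u := by field_simp
  set S : Set ℝ := {c : ℝ | 0 ≤ c ∧ c • v ∈ W t} with hS_def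
  have h0S : (0:ℝ) ∈ S := ⟨le_refl _, by rw [zero_smul]; exact h0W⟩
  have hub : ∀ c ∈ S, c ≤ (1 + |t| * F / r) * ρK v := by
    rintro c ⟨hc0, hcW⟩
    have h1 : ((1 + |t| * F / r)⁻¹ * c) • v ∈ K := by
      have := hmuK _ hcW
      rwa [smul_smul] at this
    have h2 : (1 + |t| * F / r)⁻¹ * c ≤ ρK v := hρKmax _ (by positivity) h1
    calc c = (1 + |t| * F / r) * ((1 + |t| * F / r)⁻¹ * c) := by field_simp
      _ ≤ (1 + |t| * F / r) * ρK v := mul_le_mul_of_nonneg_left h2 hmu.le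
  have hSbdd : BddAbove S := ⟨(1 + |t| * F / r) * ρK v, hub⟩
  have hρ0 : (0:ℝ) ≤ ρK v := hr.le.trans hρr
  have hlam0 : 0 ≤ 1 - |t| * F / r := by
    rw [sub_nonneg, div_le_one hr]
    linarith
  have hupper : ρW t v ≤ (1 + |t| * F / r) * ρK v := by
    rw [hρW]
    exact csSup_le ⟨0, h0S⟩ hub
  have hlower : (1 - |t| * F / r) * ρK v ≤ ρW t v := by
    rw [hρW]
    apply le_csSup hSbdd
    refine ⟨by positivity, ?_⟩
    rw [mul_smul]
    exact hlamK _ hρKv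
  refine ⟨h0W, hSbdd, ?_⟩
  rw [abs_le]
  have h6 : |t| * F / r * ρK v ≤ R * F / r * |t| := by
    rw [div_mul_eq_mul_div, div_mul_eq_mul_div, div_le_div_iff₀ hr hr]
    nlinarith [mul_le_mul_of_nonneg_left hρR (by positivity : (0:ℝ) ≤ |t| * F * r)]
  constructor <;> nlinarith

private lemma stmt13_deriv {n : ℕ}
    (K : Set (EuclideanSpace ℝ (Fin n)))
    (hK : EuclideanSpace ℝ (Fin n) → ℝ) (hKcont : Continuous hK)
    (f : EuclideanSpace ℝ (Fin n) → ℝ) (hf : Continuous f)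
    (r R F δ : ℝ) (hr : 0 < r) (hR : 0 < R) (hF : 0 < F) (hδ : 0 < δ)
    (hFb : ∀ u : EuclideanSpace ℝ (Fin n), ‖u‖ = 1 → |f u| ≤ F)
    (W : ℝ → Set (EuclideanSpace ℝ (Fin n)))
    (hW : ∀ t, W t = {x : EuclideanSpace ℝ (Fin n) |
      ∀ u : EuclideanSpace ℝ (Fin n), ‖u‖ = 1 → ⟪x, u⟫ ≤ hK u + t * f u})
    (ρW : ℝ → EuclideanSpace ℝ (Fin n) → ℝ)
    (v : EuclideanSpace ℝ (Fin n)) (hv : ‖v‖ = 1)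
    (hρW : ∀ t, ρW t v = sSup {c : ℝ | 0 ≤ c ∧ c • v ∈ W t})
    (ρ : ℝ) (hρr : r ≤ ρ) (hρR : ρ ≤ R)
    (hρW0 : ρW 0 v = ρ)
    (p : EuclideanSpace ℝ (Fin n)) (hp_def : p = ρ • v) (hpK : p ∈ K)
    (hKle : ∀ u : EuclideanSpace ℝ (Fin n), ∀ y ∈ K, ⟪y, u⟫ ≤ hK u)
    (u₀ : EuclideanSpace ℝ (Fin n)) (hu₀1 : ‖u₀‖ = 1)
    (hhu₀ : hK u₀ = ⟪p, u₀⟫) (hhu₀r : r ≤ hK u₀)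
    (huniq : ∀ u : EuclideanSpace ℝ (Fin n), ‖u‖ = 1 →
      (∀ y ∈ K, ⟪y, u⟫ ≤ ⟪p, u⟫) → u = u₀)
    (h0S : ∀ t : ℝ, |t| < δ → (0 : EuclideanSpace ℝ (Fin n)) ∈ W t)
    (hSbdd : ∀ t : ℝ, |t| < δ → BddAbove {c : ℝ | 0 ≤ c ∧ c • v ∈ W t}) :
    HasDerivAt (fun t => ρW t v) (f u₀ / hK u₀ * ρ) 0 := by
  set β : ℝ := ⟪v, u₀⟫ with hβ_def
  have hρ0 : 0 < ρ := hr.trans_le hρr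
  have hβρ : ρ * β = hK u₀ := by
    rw [hhu₀, hp_def, real_inner_smul_left]
  have hβpos : 0 < β := by
    have : 0 < ρ * β := by rw [hβρ]; linarith
    nlinarith
  set a : ℝ := f u₀ / hK u₀ * ρ with ha_def
  have hhu₀pos : 0 < hK u₀ := hr.trans_le hhu₀r
  have haβ : a * β = f u₀ := by
    rw [ha_def, div_mul_eq_mul_div, div_mul_eq_mul_div, div_eq_iff hhu₀pos.ne']
    linear_combination (f u₀) * hβρ
  have hid : ∀ t : ℝ, (ρ + t * a) * β = hK u₀ + t * f u₀ := by
    intro t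
    linear_combination hβρ + t * haβ
  -- upper bound
  have hupper : ∀ t : ℝ, |t| < δ → ρW t v ≤ ρ + t * a := by
    intro t ht
    rw [hρW]
    have h0mem : (0:ℝ) ∈ {c : ℝ | 0 ≤ c ∧ c • v ∈ W t} :=
      ⟨le_refl 0, by rw [zero_smul]; exact h0S t ht⟩
    apply csSup_le ⟨0, h0mem⟩
    rintro c' ⟨hc0, hcW⟩
    rw [hW] at hcW
    have h1 := hcW u₀ hu₀1
    rw [real_inner_smul_left, ← hid t] at h1
    exact le_of_mul_le_mul_right h1 hβpos
  -- lower bound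
  have hlower : ∀ c : ℝ, 0 < c → ∃ δ' > 0, ∀ t : ℝ, |t| < min δ δ' →
      ρ + t * a - c * |t| ≤ ρW t v := by
    intro c hc
    set Ω : Set (EuclideanSpace ℝ (Fin n)) :=
      {u | |a * ⟪v, u⟫ - f u| < c * ⟪v, u⟫} with hΩ_def
    have hΩopen : IsOpen Ω := by
      apply isOpen_lt
      · exact ((continuous_const.mul (continuous_const.inner continuous_id)).sub hf).abs
      · exact continuous_const.mul (continuous_const.inner continuous_id)
    have hu₀Ω : u₀ ∈ Ω := by
      simp only [hΩ_def, mem_setOf_eq, ← hβ_def, haβ, sub_self, abs_zero]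
      positivity
    set C : Set (EuclideanSpace ℝ (Fin n)) := Metric.sphere 0 1 \ Ω with hC_def
    have hCc : IsCompact C := (isCompact_sphere _ _).diff hΩopen
    set φ : EuclideanSpace ℝ (Fin n) → ℝ := fun u => hK u - ρ * ⟪v, u⟫ with hφ_def
    have hφcont : Continuous φ := hKcont.sub (continuous_const.mul
      (continuous_const.inner continuous_id))
    have hφpos : ∀ u ∈ C, 0 < φ u := by
      rintro u ⟨huS, huΩ⟩
      have hu1 : ‖u‖ = 1 := mem_sphere_zero_iff_norm.mp huS
      have hnn : ρ * ⟪v, u⟫ ≤ hK u := by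
        have := hKle u p hpK
        rwa [hp_def, real_inner_smul_left] at this
      rcases lt_or_eq_of_le hnn with hlt | heq
      · simp only [hφ_def]; linarith
      · exfalso
        apply huΩ
        have : u = u₀ := by
          apply huniq u hu1
          intro y hy
          rw [hp_def, real_inner_smul_left, heq]
          exact hKle u y hy
        rw [this]
        exact hu₀Ω
    obtain ⟨η, hη, hηle⟩ : ∃ η > 0, ∀ u ∈ C, η ≤ φ u := by
      rcases eq_empty_or_nonempty C with hCe | hCne
      · exact ⟨1, one_pos, by rw [hCe]; simp⟩
      · obtain ⟨u₁, hu₁C, hmin⟩ := hCc.exists_isMinOn hCne hφcont.continuousOn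
        exact ⟨φ u₁, hφpos u₁ hu₁C, fun u huC => hmin huC⟩
    refine ⟨min (η / (|a| + c + F)) (r / (|a| + c + 1)), by positivity, ?_⟩
    intro t ht
    have htδ : |t| < δ := lt_of_lt_of_le ht (min_le_left _ _)
    have ht1 : |t| * (|a| + c + F) < η := by
      have h1 : |t| < η / (|a| + c + F) :=
        lt_of_lt_of_le ht ((min_le_right _ _).trans (min_le_left _ _))
      rw [lt_div_iff₀ (by positivity)] at h1
      exact h1
    have ht2 : |t| * (|a| + c + 1) < r := by
      have h1 : |t| < r / (|a| + c + 1) :=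
        lt_of_lt_of_le ht ((min_le_right _ _).trans (min_le_right _ _))
      rw [lt_div_iff₀ (by positivity)] at h1
      exact h1
    have ht0 : 0 ≤ |t| := abs_nonneg t
    have hnn : 0 ≤ ρ + t * a - c * |t| := by
      have h1 : t * a ≥ -(|t| * |a|) := by
        have := neg_abs_le (t * a)
        rw [abs_mul] at this
        linarith
      nlinarith
    have hmem : (ρ + t * a - c * |t|) • v ∈ W t := by
      rw [hW]
      intro u hu
      rw [real_inner_smul_left]
      have hβu1 : |⟪v, u⟫| ≤ 1 := by
        have := abs_real_inner_le_norm v u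
        rwa [hv, hu, one_mul] at this
      by_cases huΩ : u ∈ Ω
      · -- regime 2 : near the unique normal
        have h1 : ρ * ⟪v, u⟫ ≤ hK u := by
          have := hKle u p hpK
          rwa [hp_def, real_inner_smul_left] at this
        have h2 : |a * ⟪v, u⟫ - f u| ≤ c * ⟪v, u⟫ := le_of_lt huΩ
        have h3 : t * (a * ⟪v, u⟫ - f u) ≤ |t| * (c * ⟪v, u⟫) := by
          calc t * (a * ⟪v, u⟫ - f u) ≤ |t * (a * ⟪v, u⟫ - f u)| := le_abs_self _
            _ = |t| * |a * ⟪v, u⟫ - f u| := abs_mul _ _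
            _ ≤ |t| * (c * ⟪v, u⟫) := mul_le_mul_of_nonneg_left h2 ht0
        nlinarith
      · -- regime 1 : away from the normal
        have huC : u ∈ C := ⟨mem_sphere_zero_iff_norm.mpr hu, huΩ⟩
        have hφu : η ≤ hK u - ρ * ⟪v, u⟫ := hηle u huC
        have habs2 : abs (t * a - c * |t|) ≤ |t| * |a| + c * |t| := by
          have h1 : abs (t * a - c * |t|) ≤ abs (t * a) + abs (c * |t|) := abs_sub _ _
          simp only [abs_mul, abs_abs, abs_of_pos hc] at h1
          exact h1
        have hA : (t * a - c * |t|) * ⟪v, u⟫ ≤ |t| * (|a| + c) := by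
          calc (t * a - c * |t|) * ⟪v, u⟫ ≤ abs ((t * a - c * |t|) * ⟪v, u⟫) := le_abs_self _
            _ = abs (t * a - c * |t|) * |⟪v, u⟫| := abs_mul _ _
            _ ≤ (|t| * |a| + c * |t|) * 1 :=
                mul_le_mul habs2 hβu1 (abs_nonneg _) (by positivity)
            _ = |t| * (|a| + c) := by ring
        have hB : -(t * f u) ≤ |t| * F := by
          have h1 : |t * f u| ≤ |t| * F := by
            rw [abs_mul]
            exact mul_le_mul_of_nonneg_left (hFb u hu) ht0
          linarith [neg_abs_le (t * f u)]
        have hexp : (ρ + t * a - c * |t|) * ⟪v, u⟫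
            = ρ * ⟪v, u⟫ + (t * a - c * |t|) * ⟪v, u⟫ := by ring
        rw [hexp]
        linarith [hA, hB, hφu, ht1]
    rw [hρW]
    exact le_csSup (hSbdd t htδ) ⟨hnn, hmem⟩
  -- assemble
  rw [hasDerivAt_iff_isLittleO, Asymptotics.isLittleO_iff]
  intro c hc
  obtain ⟨δ', hδ', hlow⟩ := hlower c hc
  have hev : ∀ᶠ t in nhds (0:ℝ), |t| < min δ δ' := by
    have := eventually_abs_sub_lt (0:ℝ) (lt_min hδ hδ')
    simpa using this
  filter_upwards [hev] with t ht
  have h1 := hupper t (lt_of_lt_of_le ht (min_le_left _ _))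
  have h2 := hlow t ht
  rw [hρW0]
  simp only [sub_zero, smul_eq_mul, Real.norm_eq_abs]
  rw [abs_le]
  have h3 : 0 ≤ c * |t| := by positivity
  constructor
  · linarith
  · linarith

/-- Derivative of the radial function of the Wulff shape of
`h_t = h_K + t f`: for spherical-Lebesgue-a.e. unit vector `v`,
`d/dt|₀ ρ_{[h_t]}(v) = (f(g_K(r_K v)) / h_K(g_K(r_K v))) ρ_K(v)`, and
`|ρ_{[h_t]}(v) - ρ_K(v)| ≤ M|t|` for `|t| < δ`, with `M, δ` independent of `v, t`. -/
theorem stmt_13 {n : ℕ} (hn : 1 ≤ n)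
    (K : Set (EuclideanSpace ℝ (Fin n)))
    (hKconv : Convex ℝ K) (hKcomp : IsCompact K)
    (hK0 : (0 : EuclideanSpace ℝ (Fin n)) ∈ interior K)
    (hK ρK : EuclideanSpace ℝ (Fin n) → ℝ)
    (hhK : ∀ v, hK v = sSup ((fun x => ⟪x, v⟫) '' K))
    (hρK : ∀ v, ρK v = sSup {c : ℝ | 0 ≤ c ∧ c • v ∈ K})
    (g : EuclideanSpace ℝ (Fin n) → EuclideanSpace ℝ (Fin n))
    (hg : ∀ x ∈ frontier K, ‖g x‖ = 1 ∧ ∀ y ∈ K, ⟪y, g x⟫ ≤ ⟪x, g x⟫)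
    (f : EuclideanSpace ℝ (Fin n) → ℝ) (hf : Continuous f)
    (W : ℝ → Set (EuclideanSpace ℝ (Fin n)))
    (hW : ∀ t, W t = {x : EuclideanSpace ℝ (Fin n) |
      ∀ u : EuclideanSpace ℝ (Fin n), ‖u‖ = 1 → ⟪x, u⟫ ≤ hK u + t * f u})
    (ρW : ℝ → EuclideanSpace ℝ (Fin n) → ℝ)
    (hρW : ∀ t v, ρW t v = sSup {c : ℝ | 0 ≤ c ∧ c • v ∈ W t}) :
    ∃ δ M : ℝ, 0 < δ ∧ 0 < M ∧
      ∀ᵐ (v : Metric.sphere (0 : EuclideanSpace ℝ (Fin n)) 1)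
          ∂((volume : Measure (EuclideanSpace ℝ (Fin n))).toSphere),
        (∀ t : ℝ, |t| < δ → |ρW t (v : EuclideanSpace ℝ (Fin n)) -
            ρK (v : EuclideanSpace ℝ (Fin n))| ≤ M * |t|) ∧
        HasDerivAt (fun t => ρW t (v : EuclideanSpace ℝ (Fin n)))
          (f (g (ρK (v : EuclideanSpace ℝ (Fin n)) • (v : EuclideanSpace ℝ (Fin n)))) /
            hK (g (ρK (v : EuclideanSpace ℝ (Fin n)) • (v : EuclideanSpace ℝ (Fin n)))) *
            ρK (v : EuclideanSpace ℝ (Fin n))) 0 := by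
  classical
  have hKcl : IsClosed K := hKcomp.isClosed
  have hKne : K.Nonempty := ⟨0, interior_subset hK0⟩
  have hnhds : K ∈ nhds (0 : EuclideanSpace ℝ (Fin n)) := mem_interior_iff_mem_nhds.mp hK0
  obtain ⟨ε, hε, hball⟩ : ∃ ε > 0, Metric.ball (0 : EuclideanSpace ℝ (Fin n)) ε ⊆ K :=
    Metric.mem_nhds_iff.mp hnhds
  set r : ℝ := ε / 2 with hr_def
  have hr : 0 < r := by positivity
  have hrmem : ∀ w : EuclideanSpace ℝ (Fin n), ‖w‖ ≤ 1 → r • w ∈ K := by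
    intro w hw
    apply hball
    rw [Metric.mem_ball, dist_zero_right, norm_smul, Real.norm_eq_abs, abs_of_pos hr]
    nlinarith [norm_nonneg w]
  obtain ⟨R₀, hR₀⟩ := hKcomp.isBounded.subset_closedBall 0
  set R : ℝ := max R₀ r with hR_def
  have hrR : r ≤ R := le_max_right _ _
  have hRK : K ⊆ Metric.closedBall 0 R :=
    hR₀.trans (Metric.closedBall_subset_closedBall (le_max_left _ _))
  have hR : 0 < R := lt_of_lt_of_le hr hrR
  have hnorm_le : ∀ x ∈ K, ‖x‖ ≤ R := fun x hx => by
    simpa [Metric.mem_closedBall, dist_zero_right] using hRK hx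
  have hbdd : ∀ u : EuclideanSpace ℝ (Fin n), BddAbove ((fun x => ⟪x, u⟫) '' K) := by
    intro u
    refine ⟨R * ‖u‖, ?_⟩
    rintro y ⟨x, hx, rfl⟩
    calc ⟪x, u⟫ ≤ ‖x‖ * ‖u‖ := real_inner_le_norm x u
      _ ≤ R * ‖u‖ := by
        have := hnorm_le x hx
        have := norm_nonneg u
        nlinarith
  have hKle : ∀ x ∈ K, ∀ u, ⟪x, u⟫ ≤ hK u := fun x hx u => by
    rw [hhK]; exact le_csSup (hbdd u) ⟨x, hx, rfl⟩
  have hhK_ge : ∀ u : EuclideanSpace ℝ (Fin n), ‖u‖ = 1 → r ≤ hK u := by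
    intro u hu
    have h1 := hKle (r • u) (hrmem u hu.le) u
    rwa [real_inner_smul_left, real_inner_self_eq_norm_sq, hu, one_pow, mul_one] at h1
  obtain ⟨F, hF, hFb⟩ : ∃ F : ℝ, 0 < F ∧ ∀ u : EuclideanSpace ℝ (Fin n), ‖u‖ = 1 → |f u| ≤ F := by
    obtain ⟨C, hC⟩ := (isCompact_sphere (0 : EuclideanSpace ℝ (Fin n)) 1).exists_bound_of_continuousOn
      hf.continuousOn
    refine ⟨max C 1, lt_of_lt_of_le one_pos (le_max_right _ _), fun u hu => ?_⟩
    have := hC u (by rwa [mem_sphere_zero_iff_norm])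
    simpa using this.trans (le_max_left _ _)
  have hW0 : W 0 = K :=
    stmt13_W0 K hKconv hKcl (interior_subset hK0) hK hhK hbdd hKle hKne f W hW
  have hKiff : ∀ x : EuclideanSpace ℝ (Fin n),
      x ∈ K ↔ ∀ u : EuclideanSpace ℝ (Fin n), ‖u‖ = 1 → ⟪x, u⟫ ≤ hK u := by
    intro x
    conv_lhs => rw [← hW0]
    rw [hW 0]
    simp
  obtain ⟨habs, hglip⟩ := stmt13_gauge K hKconv hKcl hK0 r hr hrmem
  have hKcont : Continuous hK := by
    have hKlipk : LipschitzWith (Real.toNNReal R) hK := by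
      apply LipschitzWith.of_dist_le_mul
      intro x y
      rw [Real.dist_eq, Real.coe_toNNReal _ hR.le, dist_eq_norm, abs_sub_le_iff]
      have key : ∀ a b : EuclideanSpace ℝ (Fin n), hK a - hK b ≤ R * ‖a - b‖ := by
        intro a b
        rw [sub_le_iff_le_add, hhK a]
        apply csSup_le (hKne.image _)
        rintro y' ⟨z, hz, rfl⟩
        have h1 : ⟪z, a⟫ - ⟪z, b⟫ = ⟪z, a - b⟫ := (inner_sub_right z a b).symm
        have h2 : ⟪z, a - b⟫ ≤ ‖z‖ * ‖a - b‖ := real_inner_le_norm _ _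
        have h3 := hKle z hz b
        have h4 := hnorm_le z hz
        have h5 : ‖z‖ * ‖a - b‖ ≤ R * ‖a - b‖ :=
          mul_le_mul_of_nonneg_right h4 (norm_nonneg _)
        show ⟪z, a⟫ ≤ R * ‖a - b‖ + hK b
        linarith
      refine ⟨key x y, ?_⟩
      have := key y x
      rwa [norm_sub_rev] at this
    exact hKlipk.continuous
  refine ⟨r / (2 * F), R * F / r + 1, by positivity, by positivity, ?_⟩
  filter_upwards [toSphere_null K hglip] with v hdv
  have hv1 : ‖(v : EuclideanSpace ℝ (Fin n))‖ = 1 := mem_sphere_zero_iff_norm.mp v.2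
  obtain ⟨⟨hρr, hρR⟩, ⟨hpK, hpfr⟩, hρmax⟩ :=
    stmt13_radial K hKcl r R hr hR hrmem hnorm_le ρK hρK _ hv1
  have hlipAll := fun t (ht : |t| < r / (2 * F)) =>
    stmt13_lip K hK f r R F hr hR hF hrR hhK_ge hFb hKiff W hW ρK _ hv1 hρr hρR hpK hρmax
      ρW hρW t ht
  constructor
  · intro t ht
    exact (hlipAll t ht).2.2
  · have hgp := hg _ hpfr
    have hu₀1 := hgp.1
    have hsupp₀ := hgp.2
    have hhu₀ : hK (g (ρK (v : EuclideanSpace ℝ (Fin n)) • (v : EuclideanSpace ℝ (Fin n)))) =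
        ⟪ρK (v : EuclideanSpace ℝ (Fin n)) • (v : EuclideanSpace ℝ (Fin n)),
          g (ρK (v : EuclideanSpace ℝ (Fin n)) • (v : EuclideanSpace ℝ (Fin n)))⟫ := by
      refine le_antisymm ?_ (hKle _ hpK _)
      rw [hhK]
      apply csSup_le (hKne.image _)
      rintro y' ⟨z, hz, rfl⟩
      exact hsupp₀ z hz
    have hρ0 : 0 < ρK (v : EuclideanSpace ℝ (Fin n)) := hr.trans_le hρr
    have hdp : DifferentiableAt ℝ (gauge K)
        (ρK (v : EuclideanSpace ℝ (Fin n)) • (v : EuclideanSpace ℝ (Fin n))) := by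
      apply diff_gauge_smul (c := (ρK (v : EuclideanSpace ℝ (Fin n)))⁻¹) (by positivity)
      rw [smul_smul, inv_mul_cancel₀ hρ0.ne', one_smul]
      exact hdv
    have hpnotint : (ρK (v : EuclideanSpace ℝ (Fin n)) • (v : EuclideanSpace ℝ (Fin n)))
        ∉ interior K := by
      have h6 := hpfr
      rw [hKcl.frontier_eq] at h6
      exact h6.2
    have huniq : ∀ u : EuclideanSpace ℝ (Fin n), ‖u‖ = 1 →
        (∀ y ∈ K, ⟪y, u⟫ ≤ ⟪ρK (v : EuclideanSpace ℝ (Fin n)) • (v : EuclideanSpace ℝ (Fin n)), u⟫) →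
        u = g (ρK (v : EuclideanSpace ℝ (Fin n)) • (v : EuclideanSpace ℝ (Fin n))) :=
      fun u hu hs => stmt13_uniq K hKconv hnhds habs r hr hrmem _ hpK hpnotint hdp
        u _ hu hu₀1 hs hsupp₀
    have hρW0 : ρW 0 (v : EuclideanSpace ℝ (Fin n)) = ρK (v : EuclideanSpace ℝ (Fin n)) := by
      rw [hρW, hW0, ← hρK]
    exact stmt13_deriv K hK hKcont f hf r R F (r / (2 * F)) hr hR hF (by positivity)
      hFb W hW ρW _ hv1 (fun t => hρW t _) (ρK (v : EuclideanSpace ℝ (Fin n))) hρr hρR hρW0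
      _ rfl hpK (fun u y hy => hKle y hy u) _ hu₀1 hhu₀ (hhK_ge _ hu₀1) huniq
      (fun t ht => (hlipAll t ht).1) (fun t ht => (hlipAll t ht).2.1)
end

section
/- Let $N\ge n+1$, let $u_1,\dots,u_N\in\mathbb{S}^{n-1}$ not be concentrated on a closed hemisphere, let $\alpha_1,\dots,\alpha_N>0$, and let $P$ be a polytope in $\mathcal{P}(u_1,\dots,u_N)$. Then the function $\Psi(\eta)=\sum_{i=1}^N\alpha_i\log(h_P(u_i)-\eta\cdot u_i)$, defined on the interior of $P$, attains its maximum at a unique interior point $\eta(P)$. -/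
/-!
The polytope is `P = {x | ∀ i, ⟪x, u i⟫ ≤ h_P(u i)}` and its interior is the open polytope
`U = {x | ∀ i, ⟪x, u i⟫ < h_P(u i)}`, on which `Ψ` is finite. Since the `u i` are not concentrated
on a closed hemisphere, `max_i ⟪v, u i⟫ ≥ c ‖v‖` for some `c > 0`, so `P` is compact. The function
`exp Ψ = ∏ (h_P(u i) - ⟪η, u i⟫) ^ α i` extends continuously to `P` by zero on `∂P`, hence attains
its maximum in `U`. The `u i` span, so `Ψ` is strictly concave and the maximiser is unique.
-/

open scoped RealInnerProductSpace

section

variable {ι E : Type*} [NormedAddCommGroup E] [InnerProductSpace ℝ E]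

theorem eq_setOf_forall_inner_le_sSup {u : ι → E} {a : ι → ℝ} {P : Set E}
    (hP : P = ⋂ i, {x | ⟪x, u i⟫ ≤ a i}) (hne : P.Nonempty) :
    P = {x | ∀ i, ⟪x, u i⟫ ≤ sSup ((fun y => ⟪y, u i⟫) '' P)} := by
  have hle : ∀ i, ∀ y ∈ P, ⟪y, u i⟫ ≤ a i := fun i y hy => Set.mem_iInter.1 (hP ▸ hy) i
  ext x
  refine ⟨fun hx i => le_csSup ⟨a i, Set.forall_mem_image.2 (hle i)⟩ ⟨x, hx, rfl⟩, fun hx => ?_⟩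
  rw [hP]
  exact Set.mem_iInter.2 fun i =>
    (hx i).trans (csSup_le (hne.image _) (Set.forall_mem_image.2 (hle i)))

theorem setOf_inner_le_eq_preimage (v : E) (b : ℝ) :
    {x : E | ⟪x, v⟫ ≤ b} = innerSL ℝ v ⁻¹' Set.Iic b := by
  ext; simp [real_inner_comm]

theorem setOf_inner_lt_eq_preimage (v : E) (b : ℝ) :
    {x : E | ⟪x, v⟫ < b} = innerSL ℝ v ⁻¹' Set.Iio b := by
  ext; simp [real_inner_comm]

theorem interior_setOf_inner_le {v : E} (hv : v ≠ 0) (b : ℝ) :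
    interior {x : E | ⟪x, v⟫ ≤ b} = {x | ⟪x, v⟫ < b} := by
  have hf : innerSL ℝ v ≠ 0 := fun h => hv (by simpa using congr($h v))
  rw [setOf_inner_le_eq_preimage, setOf_inner_lt_eq_preimage, ← interior_Iic,
    (ContinuousLinearMap.isOpenMap_of_ne_zero _ hf).preimage_interior_eq_interior_preimage
      (innerSL ℝ v).continuous]

theorem interior_setOf_forall_inner_le [Finite ι] {u : ι → E} (hu : ∀ i, u i ≠ 0) (b : ι → ℝ) :
    interior {x : E | ∀ i, ⟪x, u i⟫ ≤ b i} = {x | ∀ i, ⟪x, u i⟫ < b i} := by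
  simp only [Set.ofPred_forall, interior_iInter_of_finite, interior_setOf_inner_le (hu _)]

theorem convex_setOf_forall_inner_lt (u : ι → E) (b : ι → ℝ) :
    Convex ℝ {x : E | ∀ i, ⟪x, u i⟫ < b i} := by
  simp only [Set.ofPred_forall, setOf_inner_lt_eq_preimage]
  exact convex_iInter fun i => (convex_Iio (b i)).linear_preimage (innerSL ℝ (u i)).toLinearMap

def NotConcentratedOnClosedHemisphere (u : ι → E) : Prop :=
  ∀ w : E, w ≠ 0 → ∃ i, ⟪w, u i⟫ < 0

namespace NotConcentratedOnClosedHemisphere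

variable [Fintype ι] [Nonempty ι] [FiniteDimensional ℝ E] {u : ι → E}

-- `c` is the minimum of `v ↦ max_i ⟪v, u i⟫` on the unit sphere.
theorem exists_pos_mul_norm_le_inner (hu : NotConcentratedOnClosedHemisphere u) :
    ∃ c > 0, ∀ v : E, ∃ i, c * ‖v‖ ≤ ⟪v, u i⟫ := by
  rcases subsingleton_or_nontrivial E with hE | hE
  · exact ⟨1, one_pos, fun v => ⟨Classical.arbitrary ι, by simp [Subsingleton.elim v 0]⟩⟩
  let g : E → ℝ := fun v => Finset.univ.sup' Finset.univ_nonempty fun i => ⟪v, u i⟫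
  have hg : Continuous g :=
    Continuous.finset_sup'_apply _ fun i _ => continuous_id.inner continuous_const
  obtain ⟨v₀, hv₀, hmin⟩ := (isCompact_sphere (0 : E) 1).exists_isMinOn
    (NormedSpace.sphere_nonempty.2 zero_le_one) hg.continuousOn
  have hpos : 0 < g v₀ := by
    obtain ⟨i, hi⟩ := hu (-v₀) (neg_ne_zero.2 (ne_zero_of_mem_unit_sphere ⟨v₀, hv₀⟩))
    rw [inner_neg_left, neg_lt_zero] at hi
    exact hi.trans_le (Finset.le_sup' (fun i => ⟪v₀, u i⟫) (Finset.mem_univ i))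
  refine ⟨g v₀, hpos, fun v => ?_⟩
  rcases eq_or_ne v 0 with rfl | hv
  · exact ⟨Classical.arbitrary ι, by simp⟩
  have hnorm : 0 < ‖v‖ := norm_pos_iff.2 hv
  obtain ⟨i, -, hi⟩ := Finset.exists_mem_eq_sup' Finset.univ_nonempty
    fun i => ⟪‖v‖⁻¹ • v, u i⟫
  refine ⟨i, ?_⟩
  have h : g v₀ ≤ ⟪‖v‖⁻¹ • v, u i⟫ :=
    hi ▸ hmin (show ‖v‖⁻¹ • v ∈ Metric.sphere (0 : E) 1 by simp [norm_smul, hnorm.ne'])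
  rwa [real_inner_smul_left, le_inv_mul_iff₀ hnorm, mul_comm] at h

theorem isBounded_setOf_forall_inner_le (hu : NotConcentratedOnClosedHemisphere u)
    (b : ι → ℝ) : Bornology.IsBounded {x : E | ∀ i, ⟪x, u i⟫ ≤ b i} := by
  obtain ⟨c, hc, hcu⟩ := hu.exists_pos_mul_norm_le_inner
  obtain ⟨B, hB⟩ := (Set.finite_range b).bddAbove
  refine isBounded_iff_forall_norm_le.2 ⟨B / c, fun x hx => ?_⟩
  obtain ⟨i, hi⟩ := hcu x
  rw [le_div_iff₀ hc, mul_comm]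
  exact hi.trans ((hx i).trans (hB ⟨i, rfl⟩))

end NotConcentratedOnClosedHemisphere

noncomputable def logBarrier [Fintype ι] (α b : ι → ℝ) (u : ι → E) (η : E) : ℝ :=
  ∑ i, α i * Real.log (b i - ⟪η, u i⟫)

section LogBarrier

variable [Fintype ι] {α b : ι → ℝ} {u : ι → E}

theorem strictConcaveOn_logBarrier (hspan : ∀ w : E, w ≠ 0 → ∃ i, ⟪w, u i⟫ ≠ 0)
    (hα : ∀ i, 0 < α i) :
    StrictConcaveOn ℝ {η | ∀ i, ⟪η, u i⟫ < b i} (logBarrier α b u) := by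
  refine ⟨convex_setOf_forall_inner_lt u b, fun x hx y hy hxy s t hs ht hst => ?_⟩
  have hslack : ∀ i, b i - ⟪s • x + t • y, u i⟫ =
      s * (b i - ⟪x, u i⟫) + t * (b i - ⟪y, u i⟫) := fun i => by
    rw [inner_add_left, real_inner_smul_left, real_inner_smul_left]
    linear_combination (-b i) * hst
  have hterm : ∀ i, s * (α i * Real.log (b i - ⟪x, u i⟫)) + t * (α i * Real.log (b i - ⟪y, u i⟫))
      = α i * (s * Real.log (b i - ⟪x, u i⟫) + t * Real.log (b i - ⟪y, u i⟫)) := fun i => by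
    ring
  have hx' : ∀ i, b i - ⟪x, u i⟫ ∈ Set.Ioi 0 := fun i => sub_pos.2 (hx i)
  have hy' : ∀ i, b i - ⟪y, u i⟫ ∈ Set.Ioi 0 := fun i => sub_pos.2 (hy i)
  obtain ⟨j, hj⟩ := hspan (x - y) (sub_ne_zero.2 hxy)
  have hxyj : b j - ⟪x, u j⟫ ≠ b j - ⟪y, u j⟫ := by
    rw [inner_sub_left] at hj
    contrapose! hj
    linarith
  simp only [logBarrier, smul_eq_mul, Finset.mul_sum, ← Finset.sum_add_distrib, hterm, hslack]
  refine Finset.sum_lt_sum (fun i _ => ?_) ⟨j, Finset.mem_univ j, ?_⟩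
  · exact mul_le_mul_of_nonneg_left
      (strictConcaveOn_log_Ioi.concaveOn.2 (hx' i) (hy' i) hs.le ht.le hst) (hα i).le
  · exact mul_lt_mul_of_pos_left
      (strictConcaveOn_log_Ioi.2 (hx' j) (hy' j) hxyj hs ht hst) (hα j)

theorem exists_isMaxOn_logBarrier [Nonempty ι] [FiniteDimensional ℝ E]
    (hu : NotConcentratedOnClosedHemisphere u) (hα : ∀ i, 0 < α i)
    (hne : {η | ∀ i, ⟪η, u i⟫ < b i}.Nonempty) :
    ∃ η ∈ {η | ∀ i, ⟪η, u i⟫ < b i}, IsMaxOn (logBarrier α b u) {η | ∀ i, ⟪η, u i⟫ < b i} η := by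
  set U := {η | ∀ i, ⟪η, u i⟫ < b i}
  -- `Φ = exp ∘ logBarrier` on `U`, and `Φ` is continuous and vanishes on `∂U`.
  let Φ : E → ℝ := fun η => ∏ i, (b i - ⟪η, u i⟫) ^ α i
  have hΦ : Continuous Φ := continuous_finsetProd _ fun i _ =>
    (Real.continuous_rpow_const (hα i).le).comp (continuous_const.sub (by fun_prop))
  have hpos : ∀ ζ ∈ U, 0 < Φ ζ := fun ζ hζ =>
    Finset.prod_pos fun i _ => Real.rpow_pos_of_pos (sub_pos.2 (hζ i)) _
  have hlog : ∀ ζ ∈ U, Real.log (Φ ζ) = logBarrier α b u ζ := fun ζ hζ => by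
    rw [Real.log_prod fun i _ => (Real.rpow_pos_of_pos (sub_pos.2 (hζ i)) _).ne']
    exact Finset.sum_congr rfl fun i _ => Real.log_rpow (sub_pos.2 (hζ i)) _
  have hK : IsCompact {η | ∀ i, ⟪η, u i⟫ ≤ b i} := by
    refine Metric.isCompact_of_isClosed_isBounded ?_ (hu.isBounded_setOf_forall_inner_le b)
    simp only [Set.ofPred_forall]
    exact isClosed_iInter fun i => isClosed_le (by fun_prop) continuous_const
  obtain ⟨η₀, hη₀⟩ := hne
  obtain ⟨η, hηK, hmax⟩ := hK.exists_isMaxOn ⟨η₀, fun i => (hη₀ i).le⟩ hΦ.continuousOn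
  have hηU : η ∈ U := fun i => (hηK i).lt_of_ne fun h => by
    have hzero : Φ η = 0 := Finset.prod_eq_zero (Finset.mem_univ i)
      (by rw [h, sub_self, Real.zero_rpow (hα i).ne'])
    exact (hpos η₀ hη₀).not_ge (hzero ▸ hmax fun j => (hη₀ j).le)
  refine ⟨η, hηU, fun ζ hζ => ?_⟩
  rw [Set.mem_ofPred_eq, ← hlog ζ hζ, ← hlog η hηU]
  exact Real.log_le_log (hpos ζ hζ) (hmax fun i => (hζ i).le)

theorem existsUnique_isMaxOn_logBarrier [Nonempty ι] [FiniteDimensional ℝ E]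
    (hu : NotConcentratedOnClosedHemisphere u) (hα : ∀ i, 0 < α i)
    (hne : {η | ∀ i, ⟪η, u i⟫ < b i}.Nonempty) :
    ∃! η, η ∈ {η | ∀ i, ⟪η, u i⟫ < b i} ∧
      ∀ ζ ∈ {η | ∀ i, ⟪η, u i⟫ < b i}, logBarrier α b u ζ ≤ logBarrier α b u η := by
  obtain ⟨η, hη, hmax⟩ := exists_isMaxOn_logBarrier hu hα hne
  have hspan : ∀ w : E, w ≠ 0 → ∃ i, ⟪w, u i⟫ ≠ 0 := fun w hw => (hu w hw).imp fun _ => ne_of_lt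
  exact ⟨η, ⟨hη, hmax⟩, fun η' ⟨hη', hmax'⟩ =>
    (strictConcaveOn_logBarrier hspan hα).eq_of_isMaxOn hmax' hmax hη' hη⟩

end LogBarrier

end

/-- Let `u₁,…,u_N` (`N ≥ n+1`) be unit vectors not concentrated on a
closed hemisphere and `α_i > 0`. For a polytope `P = ⋂ᵢ {x : x·uᵢ ≤ aᵢ}` with nonempty
interior, the function `Ψ(η) = ∑ αᵢ log(h_P(uᵢ) - η·uᵢ)` attains its maximum over the
interior of `P` at a unique interior point. -/
theorem stmt_15 {n N : ℕ} (hN : n + 1 ≤ N)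
    (u : Fin N → EuclideanSpace ℝ (Fin n))
    (hu : ∀ i, ‖u i‖ = 1)
    (hhemi : ∀ w : EuclideanSpace ℝ (Fin n), w ≠ 0 → ∃ i, ⟪w, u i⟫ < 0)
    (α : Fin N → ℝ) (hα : ∀ i, 0 < α i)
    (a : Fin N → ℝ)
    (P : Set (EuclideanSpace ℝ (Fin n)))
    (hP : P = ⋂ i, {x : EuclideanSpace ℝ (Fin n) | ⟪x, u i⟫ ≤ a i})
    (hPint : (interior P).Nonempty)
    (hK : EuclideanSpace ℝ (Fin n) → ℝ)
    (hhK : ∀ v, hK v = sSup ((fun x => ⟪x, v⟫) '' P))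
    (Ψ : EuclideanSpace ℝ (Fin n) → ℝ)
    (hΨ : ∀ η, Ψ η = ∑ i, α i * Real.log (hK (u i) - ⟪η, u i⟫)) :
    ∃! η : EuclideanSpace ℝ (Fin n),
      η ∈ interior P ∧ ∀ ζ ∈ interior P, Ψ ζ ≤ Ψ η := by
  have : Nonempty (Fin N) := ⟨⟨0, by omega⟩⟩
  have hPb : P = {x | ∀ i, ⟪x, u i⟫ ≤ hK (u i)} := by
    simp_rw [hhK]
    exact eq_setOf_forall_inner_le_sSup hP (hPint.mono interior_subset)
  have hint : interior P = {x | ∀ i, ⟪x, u i⟫ < hK (u i)} := by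
    rw [hPb]
    exact interior_setOf_forall_inner_le (fun i => norm_ne_zero_iff.1 (by simp [hu i])) _
  rw [hint] at hPint ⊢
  rw [show Ψ = logBarrier α (fun i => hK (u i)) u from funext hΨ]
  exact existsUnique_isMaxOn_logBarrier hhemi hα hPint
end

section
/- Let $n\ge 2$, $2\le p<\infty$, and set $\Theta_i=\frac{n(p-2)+i(n(p-1)+p)}{n(n+2)(p-1)}$ for $i=1,\dots,n-1$, with $\Theta_n:=1$, $\Theta_0:=0$. Let $0<a_1\le a_2\le\cdots\le a_n$ and let $\alpha_1,\dots,\alpha_n\ge 0$ with $\sum\alpha_i=1$ and $\sum_{l=1}^i\alpha_l\le(1-t_0)\Theta_i$ for $i=1,\dots,n-1$ and some $t_0\in(0,1)$. Then $\sum_{i=1}^n\alpha_i\log a_i \ \ge\ t_0\log a_n + \frac{(1-t_0)n(p-2)}{n(n+2)(p-1)}\log a_1 + \frac{(1-t_0)(n(p-1)+p)}{n(n+2)(p-1)}\sum_{i=1}^n\log a_i$. -/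
/-! Summation by parts: if the partial sums of weights `w` never exceed those of `v` and the
totals agree, then `∑ vᵢ xᵢ ≤ ∑ wᵢ xᵢ` for every increasing `x`. The lower bound of the estimate
is `∑ vᵢ log aᵢ` for the weights `v = c + e δ₁ + t₀ δₙ`, where
`c = (1-t₀)(n(p-1)+p)/(n(n+2)(p-1))` and `e = (1-t₀)n(p-2)/(n(n+2)(p-1))`: their partial sums
are `(1-t₀)Θᵢ` for `i < n` and their total is `nc + e + t₀ = 1`, so the hypotheses on `α` say
exactly that `α` is dominated by `v` in this sense. -/

open Finset

theorem sum_range_mul_le_sum_range_mul_of_sum_range_le {v w x : ℕ → ℝ} {n : ℕ}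
    (hx : MonotoneOn x (Set.Iio n))
    (hpre : ∀ k < n, ∑ i ∈ range k, w i ≤ ∑ i ∈ range k, v i)
    (htot : ∑ i ∈ range n, w i = ∑ i ∈ range n, v i) :
    ∑ i ∈ range n, v i * x i ≤ ∑ i ∈ range n, w i * x i := by
  suffices h : 0 ≤ ∑ i ∈ range n, x i • (w i - v i) by
    rw [← sub_nonneg, ← sum_sub_distrib]
    convert h using 2 with i
    rw [smul_eq_mul]; ring
  rw [sum_range_by_parts, sum_sub_distrib, htot, sub_self, smul_zero, zero_sub, neg_nonneg]
  refine sum_nonpos fun i hi => smul_nonpos_of_nonneg_of_nonpos ?_ ?_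
  all_goals have hi : i + 1 < n := by rw [mem_range] at hi; omega
  · exact sub_nonneg.mpr (hx (by simp; omega) (by simpa using hi) (by omega))
  · rw [sum_sub_distrib]; exact sub_nonpos.mpr (hpre _ hi)

theorem Fin.sum_filter_val_lt_eq_sum_range {M : Type*} [AddCommMonoid M] {n k : ℕ} (hk : k ≤ n)
    (f : Fin n → M) :
    ∑ l ∈ univ.filter (fun l : Fin n => (l : ℕ) < k), f l =
      ∑ i ∈ range k, if h : i < n then f ⟨i, h⟩ else 0 := by
  rw [sum_filter, sum_fin_eq_sum_range, ← sum_range_add_sum_Ico _ hk,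
    sum_eq_zero (s := Ico k n), add_zero]
  · exact sum_congr rfl fun i hi => by simp [mem_range.mp hi]
  · intro i hi
    simp [(mem_Ico.mp hi).1]

theorem Fin.sum_mul_le_sum_mul_of_sum_filter_le {n : ℕ} {v w x : Fin n → ℝ} (hx : Monotone x)
    (hpre : ∀ k < n, ∑ l ∈ univ.filter (fun l : Fin n => (l : ℕ) < k), w l ≤
      ∑ l ∈ univ.filter (fun l : Fin n => (l : ℕ) < k), v l)
    (htot : ∑ i, w i = ∑ i, v i) :
    ∑ i, v i * x i ≤ ∑ i, w i * x i := by
  have hx' : MonotoneOn (fun i => if h : i < n then x ⟨i, h⟩ else 0) (Set.Iio n) := by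
    intro i hi j hj hij
    simp only [Set.mem_Iio] at hi hj
    simpa [hi, hj] using hx (Fin.mk_le_mk.mpr hij)
  have key := sum_range_mul_le_sum_range_mul_of_sum_range_le hx'
    (fun k hk => by simpa only [Fin.sum_filter_val_lt_eq_sum_range hk.le] using hpre k hk)
    (by simpa only [sum_fin_eq_sum_range] using htot)
  simp only [sum_fin_eq_sum_range]
  convert key using 2 with i <;> split_ifs <;> simp

theorem Fin.mul_add_mul_add_mul_sum_le_sum_mul {n : ℕ} (hn : 0 < n) {α x : Fin n → ℝ}
    (hx : Monotone x) {c e t : ℝ}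
    (hpre : ∀ k, 1 ≤ k → k < n → ∑ l ∈ univ.filter (fun l : Fin n => (l : ℕ) < k), α l ≤ k * c + e)
    (htot : ∑ i, α i = n * c + e + t) :
    t * x ⟨n - 1, by omega⟩ + e * x ⟨0, hn⟩ + c * ∑ i, x i ≤ ∑ i, α i * x i := by
  set V : Fin n → ℝ := fun i =>
    c + (if i = ⟨0, hn⟩ then e else 0) + (if i = ⟨n - 1, by omega⟩ then t else 0) with hV
  have hV_mul : ∑ i, V i * x i = t * x ⟨n - 1, by omega⟩ + e * x ⟨0, hn⟩ + c * ∑ i, x i := by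
    simp only [hV, add_mul, ite_mul, zero_mul, sum_add_distrib, sum_ite_eq', mem_univ, if_true,
      mul_sum]
    ring
  have hV_pre : ∀ k, 1 ≤ k → k < n →
      ∑ l ∈ univ.filter (fun l : Fin n => (l : ℕ) < k), V l = k * c + e := by
    intro k hk hkn
    simp only [hV, sum_add_distrib, Finset.sum_const, card_filter_val_lt, nsmul_eq_mul,
      Nat.cast_min, sum_ite_eq', mem_filter, mem_univ, true_and]
    rw [min_eq_right (by exact_mod_cast hkn.le), if_pos (by omega : 0 < k), if_neg (by omega)]
    ring
  have hV_tot : ∑ i, V i = n * c + e + t := by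
    simp only [hV, sum_add_distrib, Finset.sum_const, card_univ, Fintype.card_fin, nsmul_eq_mul,
      sum_ite_eq', mem_univ, if_true]
  rw [← hV_mul]
  refine Fin.sum_mul_le_sum_mul_of_sum_filter_le hx (fun k hk => ?_) (htot.trans hV_tot.symm)
  rcases Nat.eq_zero_or_pos k with rfl | hk1
  · simp
  · exact (hpre k hk1 hk).trans (hV_pre k hk1 hk).ge

/-- the entropy estimate along John-ellipsoid semi-axes. With
`Θ_i = (n(p-2)+i(n(p-1)+p))/(n(n+2)(p-1))`, `0 < a₁ ≤ ⋯ ≤ aₙ`, weights `αᵢ ≥ 0`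
summing to 1 whose partial sums satisfy `α₁+⋯+αᵢ ≤ (1-t₀)Θᵢ` for `i = 1,…,n-1`,
one has
`∑ αᵢ log aᵢ ≥ t₀ log aₙ + ((1-t₀)n(p-2))/(n(n+2)(p-1)) log a₁
  + ((1-t₀)(n(p-1)+p))/(n(n+2)(p-1)) ∑ log aᵢ`. -/
theorem stmt_19 (n : ℕ) (hn : 2 ≤ n) (p : ℝ) (hp : 2 ≤ p)
    (t₀ : ℝ)
    (a : Fin n → ℝ) (ha : ∀ i, 0 < a i) (hamono : Monotone a)
    (α : Fin n → ℝ) (hsum : ∑ i, α i = 1)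
    (hpartial : ∀ i : ℕ, 1 ≤ i → i ≤ n - 1 →
      ∑ l ∈ Finset.univ.filter (fun l : Fin n => (l : ℕ) < i), α l ≤
        (1 - t₀) * ((n * (p - 2) + i * (n * (p - 1) + p)) / (n * (n + 2) * (p - 1)))) :
    t₀ * Real.log (a ⟨n - 1, by omega⟩) +
      (1 - t₀) * (n * (p - 2)) / (n * (n + 2) * (p - 1)) * Real.log (a ⟨0, by omega⟩) +
      (1 - t₀) * (n * (p - 1) + p) / (n * (n + 2) * (p - 1)) * ∑ i, Real.log (a i) ≤
    ∑ i, α i * Real.log (a i) := by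
  have hn0 : (n : ℝ) ≠ 0 := Nat.cast_ne_zero.mpr (by omega)
  have hp1 : p - 1 ≠ 0 := by linarith
  have hlog : Monotone fun i => Real.log (a i) := fun i j hij =>
    Real.log_le_log (ha i) (hamono hij)
  refine Fin.mul_add_mul_add_mul_sum_le_sum_mul (by omega) hlog
    (fun k hk hkn => (hpartial k hk (by omega)).trans_eq (by ring)) ?_
  rw [hsum]
  field_simp
  ring
end
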